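/- Two functions f, g : Σ* → ℕ∞ satisfy f ≈ g (i.e., there exists a correction function α with f ≈_α g) if and only if for every subset A ⊆ Σ*, f is bounded on A iff g is bounded on A. -/

import Mathlib

/-!
A correction function transports bounds through suprema, which gives one direction. Conversely,
if `f` and `g` have the same bounded sets, then `g` is bounded on every sublevel set
`{w | f w ≤ n}` with `n < ⊤` and vice versa, so
`α n = n ⊔ ⨆ {g w | f w ≤ n} ⊔ ⨆ {f w | g w ≤ n}` is a correction function
witnessing `f ≈ g`.
-/

/-- `f ≈ g`: there is a correction function `α` with `f ≈_α g`. -/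
def CostEquiv {Sig : Type} (f g : List Sig → ℕ∞) : Prop :=
  ∃ α : ℕ∞ → ℕ∞, Monotone α ∧ (∀ x, α x = ⊤ ↔ x = ⊤) ∧
    ∀ w, f w ≤ α (g w) ∧ g w ≤ α (f w)

section CorrectionFunction

variable {ι β : Type*} [CompleteLinearOrder β] {f g : ι → β}

theorem iSup₂_lt_top_of_le_comp {α : β → β} (hα : Monotone α)
    (htop : ∀ x, α x = ⊤ → x = ⊤) (hle : ∀ w, f w ≤ α (g w)) {A : Set ι}
    (hg : (⨆ a ∈ A, g a) < ⊤) : (⨆ a ∈ A, f a) < ⊤ :=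
  calc (⨆ a ∈ A, f a) ≤ α (⨆ a ∈ A, g a) :=
        iSup₂_le fun a ha => (hle a).trans (hα (le_iSup₂ (f := fun a _ => g a) a ha))
    _ < ⊤ := lt_top_iff_ne_top.2 fun hT => hg.ne (htop _ hT)

theorem iSup_sublevel_lt_top
    (h : ∀ A : Set ι, (⨆ a ∈ A, f a) < ⊤ → (⨆ a ∈ A, g a) < ⊤) {n : β} (hn : n < ⊤) :
    (⨆ w ∈ {w | f w ≤ n}, g w) < ⊤ :=
  h _ ((iSup₂_le fun w (hw : f w ≤ n) => hw).trans_lt hn)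

variable (f g) in
def boundCorrection (n : β) : β :=
  n ⊔ (⨆ w ∈ {w | f w ≤ n}, g w) ⊔ (⨆ w ∈ {w | g w ≤ n}, f w)

theorem boundCorrection_comm : boundCorrection f g = boundCorrection g f :=
  funext fun _ => sup_right_comm _ _ _

theorem monotone_boundCorrection : Monotone (boundCorrection f g) := fun _ _ hnm =>
  sup_le_sup (sup_le_sup hnm (iSup_le_iSup_of_subset fun _ hw => le_trans hw hnm))
    (iSup_le_iSup_of_subset fun _ hw => le_trans hw hnm)

theorem le_boundCorrection_apply (w : ι) : g w ≤ boundCorrection f g (f w) :=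
  le_sup_of_le_left (le_sup_of_le_right (le_iSup₂ (f := fun w' _ => g w') w le_rfl))

theorem boundCorrection_eq_top_iff
    (h : ∀ A : Set ι, (⨆ a ∈ A, f a) < ⊤ ↔ (⨆ a ∈ A, g a) < ⊤) {n : β} :
    boundCorrection f g n = ⊤ ↔ n = ⊤ := by
  refine ⟨fun hT => by_contra fun hn => ?_,
    fun hn => top_unique (hn ▸ le_sup_left.trans le_sup_left)⟩
  have hn : n < ⊤ := lt_top_iff_ne_top.2 hn
  have hbdd : boundCorrection f g n < ⊤ := sup_lt_iff.2
    ⟨sup_lt_iff.2 ⟨hn, iSup_sublevel_lt_top (fun A => (h A).1) hn⟩,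
      iSup_sublevel_lt_top (fun A => (h A).2) hn⟩
  exact hbdd.ne hT

end CorrectionFunction

/-- `f ≈ g` iff for every set `A` of words, `f` is bounded on `A`
iff `g` is bounded on `A`. -/
theorem costEquiv_iff_bounded_sets
    (Sig : Type) (f g : List Sig → ℕ∞) :
    CostEquiv f g ↔
      ∀ A : Set (List Sig), ((⨆ a ∈ A, f a) < ⊤ ↔ (⨆ a ∈ A, g a) < ⊤) := by
  constructor
  · rintro ⟨α, hα, htop, hle⟩ A
    exact ⟨iSup₂_lt_top_of_le_comp hα (fun x => (htop x).1) (fun w => (hle w).2),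
      iSup₂_lt_top_of_le_comp hα (fun x => (htop x).1) (fun w => (hle w).1)⟩
  · intro h
    refine ⟨boundCorrection f g, monotone_boundCorrection, fun _ => boundCorrection_eq_top_iff h,
      fun w => ⟨?_, le_boundCorrection_apply w⟩⟩
    rw [boundCorrection_comm]
    exact le_boundCorrection_apply w
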